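/- arXiv:2401.17094 — 2 statements merged into one kernel-verified Lean document; each statement's English description precedes it below -/
import Mathlib

section
/- Let m be an odd positive integer and let a, b, c ∈ F_{2^m} satisfy a² + ab + ac + b² + bc + c² = 0. Then a = b = c. -/
/-!
Put `x = a + b` and `y = a + c`. In characteristic 2 the hypothesis reads `x² + xy + y² = 0`.
If `y ≠ 0`, then `t = x / y` satisfies `t² + t + 1 = 0`, so `t` is a cube root of unity different
from `1` and `3` divides the order `2^m - 1` of the multiplicative group, which is impossible for
odd `m` since `2^m ≡ 2 (mod 3)`. Hence `y = 0`, then `x = 0`, i.e. `a = b = c`.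
-/

theorem Nat.not_three_dvd_two_pow_sub_one {m : ℕ} (hm : Odd m) : ¬ 3 ∣ 2 ^ m - 1 := by
  obtain ⟨k, rfl⟩ := hm
  have hpow : 2 ^ (2 * k + 1) = 2 * 4 ^ k := by rw [pow_succ, pow_mul]; ring
  have hmod : 4 ^ k % 3 = 1 := by rw [Nat.pow_mod]; simp
  have hpos : 1 ≤ 4 ^ k := Nat.one_le_pow _ _ (by norm_num)
  rw [hpow]
  omega

section Field

variable {F : Type*} [Field F]

theorem orderOf_eq_three_of_sq_add_self_add_one_eq_zero (h3 : (3 : F) ≠ 0) {t : F}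
    (ht : t ^ 2 + t + 1 = 0) : orderOf t = 3 := by
  have hcube : t ^ 3 = 1 := by linear_combination (t - 1) * ht
  have hne : t ≠ 1 := by
    rintro rfl
    exact h3 (by linear_combination ht)
  exact orderOf_eq_prime hcube hne

theorem FiniteField.three_dvd_card_sub_one_of_sq_add_self_add_one_eq_zero [Fintype F]
    (h3 : (3 : F) ≠ 0) {t : F} (ht : t ^ 2 + t + 1 = 0) : 3 ∣ Fintype.card F - 1 := by
  have ht0 : t ≠ 0 := by
    rintro rfl
    simp at ht
  rw [← orderOf_eq_three_of_sq_add_self_add_one_eq_zero h3 ht]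
  exact orderOf_dvd_of_pow_eq_one (FiniteField.pow_card_sub_one_eq_one t ht0)

theorem FiniteField.eq_zero_of_sq_add_mul_add_sq_eq_zero [Fintype F] (h3 : (3 : F) ≠ 0)
    (hq : ¬ 3 ∣ Fintype.card F - 1) {x y : F} (h : x ^ 2 + x * y + y ^ 2 = 0) :
    x = 0 ∧ y = 0 := by
  have hy : y = 0 := by
    by_contra hy
    refine hq (three_dvd_card_sub_one_of_sq_add_self_add_one_eq_zero h3 (t := x / y) ?_)
    field_simp
    linear_combination h
  subst hy
  exact ⟨pow_eq_zero_iff two_ne_zero |>.mp (by linear_combination h), rfl⟩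

end Field

theorem stmt_11 (m : ℕ) (hm : Odd m) {F : Type*} [Field F] [Fintype F]
    (hF : Fintype.card F = 2 ^ m) (a b c : F)
    (h : a ^ 2 + a * b + a * c + b ^ 2 + b * c + c ^ 2 = 0) :
    a = b ∧ b = c := by
  have : Fact (Nat.Prime 2) := ⟨Nat.prime_two⟩
  have : CharP F 2 := charP_of_card_eq_prime_pow hF
  have h3 : (3 : F) ≠ 0 := by
    rw [show (3 : F) = 1 + 2 by norm_num, CharTwo.two_eq_zero, add_zero]
    exact one_ne_zero
  obtain ⟨hab, hac⟩ := FiniteField.eq_zero_of_sq_add_mul_add_sq_eq_zero h3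
    (hF ▸ Nat.not_three_dvd_two_pow_sub_one hm) (x := a + b) (y := a + c)
    (by linear_combination h + (a ^ 2 + a * b + a * c) * CharTwo.two_eq_zero (R := F))
  rw [CharTwo.add_eq_zero] at hab hac
  exact ⟨hab, hab.symm.trans hac⟩
end

section
/- Let m be odd and q = 2^m. For all a, b ∈ F_q, the system x³ + yz² + y²z = a, y³ + x²z + xz² = b, z³ + xy² + x²y = b in F_q³ has the unique solution (d, d + (a+b)^{1/3}, d + (a+b)^{1/3}), where d = (a+b+b)^{1/3} = a^{1/3} and t^{1/3} denotes the unique cube root in F_q. -/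
noncomputable def cbrt {F : Type*} [Field F] (t : F) : F :=
  Function.invFun (fun s : F => s ^ 3) t

/-!
In characteristic two, adding the last two equations gives
`(y + z) * ((x + y + z) ^ 2 - (x * y + y * z + z * x)) = 0`. If `y = z`, the first equation reads
`x ^ 3 = a` and the sum of the first two reads `(x + y) ^ 3 = a + b`. Otherwise
`(x + y + z) ^ 2 = x * y + y * z + z * x`, which makes all three pairwise sums have the same cube
`x * y * z + (x + y + z) ^ 3`; cubing is injective on `F_{2^m}` for odd `m` (as `3 ∤ 2^m - 1`), so
`x = y = z` and again `y = z`.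
-/

open Function

theorem pow_injective_of_coprime_card_sub_one {G₀ : Type*} [GroupWithZero G₀] {n : ℕ}
    (hn : n ≠ 0) (h : (Nat.card G₀ - 1).Coprime n) : Injective (· ^ n : G₀ → G₀) := by
  intro u v huv
  simp only at huv
  rcases eq_or_ne u 0 with rfl | hu
  · exact ((pow_eq_zero_iff hn).1 (huv.symm.trans (zero_pow hn))).symm
  rcases eq_or_ne v 0 with rfl | hv
  · exact (pow_eq_zero_iff hn).1 (huv.trans (zero_pow hn))
  have hunits : (Nat.card G₀ˣ).Coprime n := Nat.card_units G₀ ▸ h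
  have := hunits.pow_left_bijective.injective
    (a₁ := Units.mk0 u hu) (a₂ := Units.mk0 v hv) (Units.ext (by simpa using huv))
  simpa using congrArg Units.val this

theorem Nat.coprime_two_pow_sub_one_three {m : ℕ} (hm : Odd m) : (2 ^ m - 1).Coprime 3 := by
  have h2m : 2 ^ m % 3 = 2 := by
    obtain ⟨k, rfl⟩ := hm
    rw [pow_succ, pow_mul, Nat.mul_mod, Nat.pow_mod]
    norm_num
  have := Nat.one_le_two_pow (n := m)
  rw [Nat.coprime_comm, Nat.Prime.coprime_iff_not_dvd Nat.prime_three]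
  omega

theorem eq_cbrt_iff {F : Type*} [Field F] (h : Bijective (· ^ 3 : F → F)) {s t : F} :
    s = cbrt t ↔ s ^ 3 = t := by
  have hcbrt : cbrt t ^ 3 = t := rightInverse_invFun h.2 t
  exact ⟨fun hs => hs ▸ hcbrt, fun hs => h.1 (hs.trans hcbrt.symm)⟩

section CharTwo

variable {R : Type*} [CommRing R] [CharP R 2] {x y z a b : R}

theorem eq_of_sq_sum_eq_pairwise_sum (hinj : Injective (· ^ 3 : R → R))
    (h : (x + y + z) ^ 2 = x * y + y * z + z * x) : y = x ∧ z = x := by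
  have htwo := CharTwo.two_eq_zero (R := R)
  have hyz : (y + z) ^ 3 = x * y * z + (x + y + z) ^ 3 := by
    linear_combination (-x) * h +
      (-(x * z ^ 2) - 2 * x * y * z - x * y ^ 2 - x * (x * y + y * z + z * x)) * htwo
  have hxz : (x + z) ^ 3 = x * y * z + (x + y + z) ^ 3 := by
    linear_combination (-y) * h +
      (-(y * z ^ 2) - 2 * x * y * z - x ^ 2 * y - y * (x * y + y * z + z * x)) * htwo
  have hxy : (x + y) ^ 3 = x * y * z + (x + y + z) ^ 3 := by
    linear_combination (-z) * h +
      (-(y ^ 2 * z) - 2 * x * y * z - x ^ 2 * z - z * (x * y + y * z + z * x)) * htwo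
  have e1 : y + z = x + z := hinj (hyz.trans hxz.symm)
  have e2 : y + z = x + y := hinj (hyz.trans hxy.symm)
  exact ⟨by linear_combination e1, by linear_combination e2⟩

theorem cubic_system_iff [NoZeroDivisors R] (hinj : Injective (· ^ 3 : R → R)) :
    (x ^ 3 + y * z ^ 2 + y ^ 2 * z = a ∧
       y ^ 3 + x ^ 2 * z + x * z ^ 2 = b ∧
       z ^ 3 + x * y ^ 2 + x ^ 2 * y = b) ↔
      (x ^ 3 = a ∧ (x + y) ^ 3 = a + b ∧ z = y) := by
  have htwo := CharTwo.two_eq_zero (R := R)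
  constructor
  · rintro ⟨h1, h2, h3⟩
    have hfactor : (y + z) * ((x + y + z) ^ 2 - (x * y + y * z + z * x)) = 0 := by
      linear_combination h2 + h3 + (b + 2 * y * z ^ 2 + 2 * y ^ 2 * z + x * z ^ 2 + 3 * x * y * z
        + x * y ^ 2 - (y + z) * (x * y + y * z + z * x)) * htwo
    have hzy : z = y := by
      rcases mul_eq_zero.1 hfactor with hyz | hσ
      · linear_combination hyz - y * htwo
      · obtain ⟨rfl, rfl⟩ := eq_of_sq_sum_eq_pairwise_sum hinj (sub_eq_zero.1 hσ)
        rfl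
    subst hzy
    refine ⟨?_, ?_, rfl⟩
    · linear_combination h1 - z ^ 3 * htwo
    · linear_combination h1 + h2 + (-(z ^ 3) + x * z ^ 2 + x ^ 2 * z) * htwo
  · rintro ⟨rfl, hxy, rfl⟩
    refine ⟨?_, ?_, ?_⟩
    · linear_combination z ^ 3 * htwo
    · linear_combination -hxy + (z ^ 3 + 2 * x ^ 2 * z + 2 * x * z ^ 2 - b) * htwo
    · linear_combination -hxy + (z ^ 3 + 2 * x ^ 2 * z + 2 * x * z ^ 2 - b) * htwo

end CharTwo

theorem stmt_14 (m : ℕ) (hm : Odd m) {F : Type*} [Field F] [Fintype F]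
    (hF : Fintype.card F = 2 ^ m) (a b : F) :
    ∀ x y z : F,
      (x ^ 3 + y * z ^ 2 + y ^ 2 * z = a ∧
       y ^ 3 + x ^ 2 * z + x * z ^ 2 = b ∧
       z ^ 3 + x * y ^ 2 + x ^ 2 * y = b) ↔
      (x = cbrt a ∧ y = cbrt a + cbrt (a + b) ∧ z = cbrt a + cbrt (a + b)) := by
  have : CharP F 2 := charP_of_card_eq_prime_pow hF
  have hinj : Injective (· ^ 3 : F → F) := pow_injective_of_coprime_card_sub_one three_ne_zero
    (by rw [Nat.card_eq_fintype_card, hF]; exact Nat.coprime_two_pow_sub_one_three hm)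
  have hbij : Bijective (· ^ 3 : F → F) := ⟨hinj, Finite.surjective_of_injective hinj⟩
  intro x y z
  rw [cubic_system_iff hinj]
  constructor
  · rintro ⟨hx, hxy, rfl⟩
    have hx' := (eq_cbrt_iff hbij).2 hx
    have hxy' := (eq_cbrt_iff hbij).2 hxy
    have hz : z = cbrt a + cbrt (a + b) := by rw [← hx', ← hxy', CharTwo.add_cancel_left]
    exact ⟨hx', hz, hz⟩
  · rintro ⟨rfl, hy, rfl⟩
    refine ⟨(eq_cbrt_iff hbij).1 rfl, ?_, hy.symm⟩
    rw [hy, CharTwo.add_cancel_left]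
    exact (eq_cbrt_iff hbij).1 rfl
end
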